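/- arXiv:2503.03766 — 5 statements merged into one kernel-verified Lean document; each statement's English description precedes it below -/
import Mathlib

section
/- An ordered pair (a,g) ∈ ℝ² satisfies g ≥ 0 and a ≥ g if and only if there exists a finite nonempty list of nonnegative real numbers whose arithmetic mean is a and whose geometric mean is g. -/
theorem stmt_1 (a g : ℝ) :
    (0 ≤ g ∧ g ≤ a) ↔
      ∃ l : List ℝ, l ≠ [] ∧ (∀ x ∈ l, 0 ≤ x) ∧
        a = l.sum / l.length ∧ g = l.prod ^ ((1 : ℝ) / l.length) := by
  constructor
  · rintro ⟨hg, hga⟩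
    set s := Real.sqrt (a ^ 2 - g ^ 2) with hs
    have hnn : 0 ≤ a ^ 2 - g ^ 2 := by nlinarith
    have hs2 : s ^ 2 = a ^ 2 - g ^ 2 := Real.sq_sqrt hnn
    have hs0 : 0 ≤ s := Real.sqrt_nonneg _
    have hsle : s ≤ a := by nlinarith
    refine ⟨[a - s, a + s], by simp, ?_, ?_, ?_⟩
    · intro x hx
      simp at hx
      rcases hx with h | h <;> subst h <;> nlinarith
    · simp
    · have hprod : ([a - s, a + s] : List ℝ).prod = g ^ 2 := by
        simp
        nlinarith
      rw [hprod]
      simp only [List.length_cons, List.length_nil]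
      norm_num
      rw [← Real.rpow_natCast g 2, ← Real.rpow_mul hg]
      norm_num
  · rintro ⟨l, hne, hpos, ha, hgeq⟩
    have hn : (0 : ℝ) < l.length := by
      have := List.length_pos_iff.mpr hne
      exact_mod_cast this
    have hprodnn : 0 ≤ l.prod := List.prod_nonneg hpos
    have hg0 : 0 ≤ g := hgeq ▸ Real.rpow_nonneg hprodnn _
    refine ⟨hg0, ?_⟩
    have key := Real.geom_mean_le_arith_mean_weighted Finset.univ
      (fun _ : Fin l.length => (1 : ℝ) / l.length) (fun i => l.get i)
      (fun i _ => by positivity)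
      (by simp; field_simp)
      (fun i _ => hpos _ (l.get_mem ..))
    have hp : l.prod = ∏ i : Fin l.length, l.get i := by
      conv_lhs => rw [← List.ofFn_get l]
      exact List.prod_ofFn
    have hsm : l.sum = ∑ i : Fin l.length, l.get i := by
      conv_lhs => rw [← List.ofFn_get l]
      exact List.sum_ofFn
    have hprodeq : (∏ i : Fin l.length, l.get i ^ ((1:ℝ) / l.length))
        = l.prod ^ ((1:ℝ) / l.length) := by
      rw [Real.finset_prod_rpow _ _ (fun i _ => hpos _ (l.get_mem ..))]
      rw [hp]
    have hsumeq : (∑ i : Fin l.length, ((1:ℝ) / l.length) * l.get i)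
        = l.sum / l.length := by
      rw [← Finset.mul_sum, hsm]
      ring
    rw [hgeq, ha, ← hprodeq, ← hsumeq]
    exact key
end

section
/- Let f : ℝ² → ℝ. The inequality f(AM, GM) ≥ 0 holds for every finite nonempty list of nonnegative real numbers (where AM and GM are the arithmetic and geometric means of the list) if and only if every (a,g) ∈ ℝ² with g ≥ 0 and a ≥ g satisfies f(a,g) ≥ 0. -/
/-!
The pairs (AM, GM) of finite nonempty lists of nonnegative reals fill out exactly the region
0 ≤ g ≤ a. AM-GM puts every such pair in the region, and conversely (a, g) is attained by the
two-element list a ± √(a² - g²), whose product is g².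
-/

theorem List.prod_rpow_one_div_length_le_sum_div_length {l : List ℝ} (hl : l ≠ [])
    (h0 : ∀ x ∈ l, 0 ≤ x) : l.prod ^ ((1 : ℝ) / l.length) ≤ l.sum / l.length := by
  have hn : (0 : ℝ) < l.length := by exact_mod_cast List.length_pos_iff.mpr hl
  have := Real.geom_mean_le_arith_mean Finset.univ (fun _ : Fin l.length ↦ (1 : ℝ)) l.get
    (by simp) (by simpa using hn) (fun i _ ↦ h0 _ (l.get_mem i))
  simpa [Fin.prod_univ_getElem, Fin.sum_univ_getElem, one_div] using this

theorem exists_list_sum_div_length_eq_and_prod_rpow_eq {a g : ℝ} (hg : 0 ≤ g) (hga : g ≤ a) :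
    ∃ l : List ℝ, l ≠ [] ∧ (∀ x ∈ l, 0 ≤ x) ∧
      l.sum / l.length = a ∧ l.prod ^ ((1 : ℝ) / l.length) = g := by
  set d := √(a ^ 2 - g ^ 2)
  have hd2 : d ^ 2 = a ^ 2 - g ^ 2 := Real.sq_sqrt (by nlinarith)
  have hda : d ≤ a := by nlinarith [Real.sqrt_nonneg (a ^ 2 - g ^ 2)]
  refine ⟨[a + d, a - d], by simp, ?_, ?_, ?_⟩
  · simp only [List.mem_cons, List.not_mem_nil, or_false]
    rintro x (rfl | rfl) <;> linarith [Real.sqrt_nonneg (a ^ 2 - g ^ 2)]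
  · norm_num
  · have hprod : (a + d) * (a - d) = g ^ 2 := by linear_combination -hd2
    norm_num [hprod, ← Real.sqrt_eq_rpow, Real.sqrt_sq hg]

theorem stmt_2 (f : ℝ × ℝ → ℝ) :
    (∀ l : List ℝ, l ≠ [] → (∀ x ∈ l, 0 ≤ x) →
        0 ≤ f (l.sum / l.length, l.prod ^ ((1 : ℝ) / l.length))) ↔
      ∀ a g : ℝ, 0 ≤ g → g ≤ a → 0 ≤ f (a, g) := by
  refine ⟨fun h a g hg hga ↦ ?_, fun h l hl h0 ↦ h _ _ ?_ ?_⟩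
  · obtain ⟨l, hl, h0, ham, hgm⟩ := exists_list_sum_div_length_eq_and_prod_rpow_eq hg hga
    simpa only [ham, hgm] using h l hl h0
  · exact Real.rpow_nonneg (List.prod_nonneg h0) _
  · exact List.prod_rpow_one_div_length_le_sum_div_length hl h0
end

section
/- For any finite group G and subgroups G₁, G₂, G₃: log(|G|/|G₁∩G₃|) + log(|G|/|G₂∩G₃|) ≥ log(|G|/|G₁∩G₂∩G₃|) + log(|G|/|G₃|); equivalently, |G₁∩G₃| · |G₂∩G₃| ≤ |G₃| · |G₁∩G₂∩G₃|. -/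
lemma card_inf_mul_relindex {G : Type*} [Group G] [Fintype G] (H L : Subgroup G) :
    Nat.card ↥(H ⊓ L) * H.relIndex L = Nat.card L := by
  have h1 : Nat.card ↥(H ⊓ L) = Nat.card ((H ⊓ L).subgroupOf L) :=
    (Nat.card_congr (Subgroup.subgroupOfEquivOfLe inf_le_right).toEquiv).symm
  rw [h1, Subgroup.inf_subgroupOf_right, Subgroup.relIndex,
    Subgroup.card_mul_index (H.subgroupOf L)]

theorem stmt_13 (G : Type*) [Group G] [Fintype G] (G₁ G₂ G₃ : Subgroup G) :
    (Real.log ((Nat.card G : ℝ) / Nat.card ↥(G₁ ⊓ G₃)) +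
        Real.log ((Nat.card G : ℝ) / Nat.card ↥(G₂ ⊓ G₃)) ≥
      Real.log ((Nat.card G : ℝ) / Nat.card ↥(G₁ ⊓ G₂ ⊓ G₃)) +
        Real.log ((Nat.card G : ℝ) / Nat.card G₃)) ∧
    Nat.card ↥(G₁ ⊓ G₃) * Nat.card ↥(G₂ ⊓ G₃) ≤
      Nat.card G₃ * Nat.card ↥(G₁ ⊓ G₂ ⊓ G₃) := by
  have key : Nat.card ↥(G₁ ⊓ G₃) * Nat.card ↥(G₂ ⊓ G₃) ≤
      Nat.card G₃ * Nat.card ↥(G₁ ⊓ G₂ ⊓ G₃) := by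
    have h1 := card_inf_mul_relindex G₁ G₃
    have h2 := card_inf_mul_relindex G₂ G₃
    have h3 := card_inf_mul_relindex (G₁ ⊓ G₂) G₃
    have hle := Subgroup.relIndex_inf_le (H := G₁) (K := G₂) (L := G₃)
    have hpos : 0 < G₁.relIndex G₃ * G₂.relIndex G₃ := by
      have p3 := Nat.card_pos (α := G₃)
      have r1 : 0 < G₁.relIndex G₃ := Nat.pos_of_ne_zero fun h => by
        rw [h, mul_zero] at h1; omega
      have r2 : 0 < G₂.relIndex G₃ := Nat.pos_of_ne_zero fun h => by
        rw [h, mul_zero] at h2; omega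
      positivity
    apply Nat.le_of_mul_le_mul_right _ hpos
    calc Nat.card ↥(G₁ ⊓ G₃) * Nat.card ↥(G₂ ⊓ G₃) * (G₁.relIndex G₃ * G₂.relIndex G₃)
        = (Nat.card ↥(G₁ ⊓ G₃) * G₁.relIndex G₃) * (Nat.card ↥(G₂ ⊓ G₃) * G₂.relIndex G₃) := by
          ring
      _ = Nat.card G₃ * Nat.card G₃ := by rw [h1, h2]
      _ = Nat.card G₃ * (Nat.card ↥(G₁ ⊓ G₂ ⊓ G₃) * (G₁ ⊓ G₂).relIndex G₃) := by rw [h3]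
      _ ≤ Nat.card G₃ * (Nat.card ↥(G₁ ⊓ G₂ ⊓ G₃) * (G₁.relIndex G₃ * G₂.relIndex G₃)) := by
          gcongr
      _ = Nat.card G₃ * Nat.card ↥(G₁ ⊓ G₂ ⊓ G₃) * (G₁.relIndex G₃ * G₂.relIndex G₃) := by
          ring
  refine ⟨?_, key⟩
  have pA : (0:ℝ) < Nat.card ↥(G₁ ⊓ G₃) := by exact_mod_cast Nat.card_pos
  have pB : (0:ℝ) < Nat.card ↥(G₂ ⊓ G₃) := by exact_mod_cast Nat.card_pos
  have pC : (0:ℝ) < Nat.card ↥(G₁ ⊓ G₂ ⊓ G₃) := by exact_mod_cast Nat.card_pos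
  have pD : (0:ℝ) < Nat.card G₃ := by exact_mod_cast Nat.card_pos
  have pG : (0:ℝ) < Nat.card G := by exact_mod_cast Nat.card_pos
  rw [ge_iff_le, Real.log_div pG.ne' pA.ne', Real.log_div pG.ne' pB.ne',
    Real.log_div pG.ne' pC.ne', Real.log_div pG.ne' pD.ne']
  have hlog : Real.log (Nat.card ↥(G₁ ⊓ G₃)) + Real.log (Nat.card ↥(G₂ ⊓ G₃)) ≤
      Real.log (Nat.card ↥(G₁ ⊓ G₂ ⊓ G₃)) + Real.log (Nat.card G₃) := by
    rw [← Real.log_mul pA.ne' pB.ne', ← Real.log_mul pC.ne' pD.ne']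
    apply Real.log_le_log (by positivity)
    rw [mul_comm (Nat.card ↥(G₁ ⊓ G₂ ⊓ G₃) : ℝ)]
    exact_mod_cast key
  linarith
end

section
/- For any four discrete random variables X₁, X₂, X₃, X₄ satisfying I(X₁;X₂) = 0 and I(X₁;X₂|X₃) = 0, the inequality I(X₃;X₄) ≤ I(X₃;X₄|X₁) + I(X₃;X₄|X₂) holds. -/
/-!
The argument of Zhang and Yeung. Let `q` be the law obtained from that of `(X₁, X₂, (X₃, X₄))` by
making `X₁` and `X₂` conditionally independent given `(X₃, X₄)` while `(X₁, X₃, X₄)` and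
`(X₂, X₃, X₄)` keep their laws. Every term of the claim depends only on these two laws, so it
suffices to prove it under `q`. The hypotheses say that the law of `(X₁, X₂, X₃)` is the
conditionally independent extension of the laws of `(X₁, X₃)` and `(X₂, X₃)`, and that it makes
`X₁` and `X₂` independent; `q` has the same laws of `(X₁, X₃)` and `(X₂, X₃)`, and Gibbs'
inequality against that extension gives `I(X₁;X₂) ≤ I(X₁;X₂|X₃)` under `q`. The Shannon identity
  `I(3;4|1) + I(3;4|2) - I(3;4) = I(1;2|3) - I(1;2) + I(1;2|4) + I(3;4|12) - I(1;2|34)`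
finishes the proof, since `I(1;2|34) = 0` under `q`.
-/

/-- Shannon entropy of a discrete random variable `X : Ω → S` on a finite sample
space with probability mass function `p`. -/
noncomputable def shannonEntropy {Ω S : Type*} [Fintype Ω] [Fintype S] [DecidableEq S]
    (p : Ω → ℝ) (X : Ω → S) : ℝ :=
  ∑ s : S, Real.negMulLog (∑ ω : Ω, if X ω = s then p ω else 0)

section
variable {Ω S₁ S₂ S₃ S₄ : Type*} [Fintype Ω] [Fintype S₁] [Fintype S₂] [Fintype S₃] [Fintype S₄]
  [DecidableEq S₁] [DecidableEq S₂] [DecidableEq S₃] [DecidableEq S₄]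

/-- Mutual information `I(X;Y) = H(X) + H(Y) - H(X,Y)`. -/
noncomputable def mutualInfo (p : Ω → ℝ) (X : Ω → S₁) (Y : Ω → S₂) : ℝ :=
  shannonEntropy p X + shannonEntropy p Y - shannonEntropy p (fun ω => (X ω, Y ω))

/-- Conditional mutual information `I(X;Y|Z) = H(X,Z) + H(Y,Z) - H(X,Y,Z) - H(Z)`. -/
noncomputable def condMutualInfo (p : Ω → ℝ) (X : Ω → S₁) (Y : Ω → S₂) (Z : Ω → S₃) : ℝ :=
  shannonEntropy p (fun ω => (X ω, Z ω)) + shannonEntropy p (fun ω => (Y ω, Z ω))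
    - shannonEntropy p (fun ω => (X ω, Y ω, Z ω)) - shannonEntropy p Z

end

open Real Finset Function

noncomputable def marginal {V U : Type*} [Fintype V] [DecidableEq U] (w : V → ℝ) (f : V → U)
    (u : U) : ℝ :=
  ∑ v, if f v = u then w v else 0

section Marginal

variable {V U : Type*} [Fintype V] [DecidableEq U] {w : V → ℝ}

lemma marginal_nonneg (hw : ∀ v, 0 ≤ w v) (f : V → U) (u : U) : 0 ≤ marginal w f u :=
  sum_nonneg fun v _ => by split_ifs <;> simp [hw v]

lemma sum_marginal [Fintype U] (f : V → U) : ∑ u, marginal w f u = ∑ v, w v := by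
  unfold marginal
  rw [sum_comm]
  simp

lemma marginal_comp [Fintype U] {A : Type*} [DecidableEq A] (f : V → U) (g : U → A) :
    marginal w (fun v => g (f v)) = marginal (marginal w f) g := by
  ext a
  unfold marginal
  calc (∑ v, if g (f v) = a then w v else 0)
      = ∑ v, ∑ u, if f v = u then (if g u = a then w v else 0) else 0 := by
        simp
    _ = ∑ u, ∑ v, if f v = u then (if g u = a then w v else 0) else 0 := sum_comm
    _ = _ := sum_congr rfl fun u _ => by split_ifs <;> simp [*]

lemma marginal_comp_eq_of_eq [Fintype U] {W A : Type*} [Fintype W] [DecidableEq A]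
    {w' : W → ℝ} {F : V → U} {F' : W → U} (h : marginal w F = marginal w' F') (g : U → A) :
    marginal w (fun v => g (F v)) = marginal w' (fun v => g (F' v)) := by
  rw [marginal_comp F g, marginal_comp F' g, h]

lemma le_marginal (hw : ∀ v, 0 ≤ w v) (f : V → U) (v : V) : w v ≤ marginal w f (f v) := by
  unfold marginal
  simpa using single_le_sum (f := fun v' => if f v' = f v then w v' else 0)
    (fun v' _ => by split_ifs <;> simp [hw v']) (mem_univ v)

lemma marginal_ne_zero (hw : ∀ v, 0 ≤ w v) (f : V → U) {v : V} (hv : w v ≠ 0) :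
    marginal w f (f v) ≠ 0 :=
  ((hw v).lt_of_ne' hv |>.trans_le (le_marginal hw f v)).ne'

lemma marginal_apply_of_injective {f : V → U} (hf : Injective f) (v : V) :
    marginal w f (f v) = w v := by
  unfold marginal
  rw [sum_eq_single v (fun v' _ hv' => if_neg (hf.ne hv')) (by simp)]
  simp

lemma marginal_eq_zero_of_comp [Fintype U] {A : Type*} [DecidableEq A] (hw : ∀ v, 0 ≤ w v)
    {f : V → U} {g : U → A} {u : U} (h : marginal w (fun v => g (f v)) (g u) = 0) :
    marginal w f u = 0 := by
  refine le_antisymm ?_ (marginal_nonneg hw f u)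
  rw [← h, marginal_comp f g]
  exact le_marginal (marginal_nonneg hw f) g u

lemma sum_marginal_pair_left {A B : Type*} [Fintype A] [DecidableEq A] [DecidableEq B]
    (f : V → A) (g : V → B) (b : B) :
    ∑ a, marginal w (fun v => (f v, g v)) (a, b) = marginal w g b := by
  unfold marginal
  rw [sum_comm]
  simp [Prod.ext_iff, ite_and]

end Marginal

section ProductMarginals

variable {A B C : Type*} [Fintype A] [Fintype B] [Fintype C]

lemma marginal_snd_apply [DecidableEq B] (m : A × B → ℝ) (b : B) :
    marginal m Prod.snd b = ∑ a, m (a, b) := by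
  simp [marginal, Fintype.sum_prod_type]

lemma marginal_fst_snd_snd_apply [DecidableEq A] [DecidableEq C] (m : A × B × C → ℝ) (a : A)
    (c : C) : marginal m (fun s => (s.1, s.2.2)) (a, c) = ∑ b, m (a, b, c) := by
  simp [marginal, Fintype.sum_prod_type, ite_and]

lemma marginal_fst_snd_fst_apply [DecidableEq A] [DecidableEq B] (m : A × B × C → ℝ) (a : A)
    (b : B) : marginal m (fun s => (s.1, s.2.1)) (a, b) = ∑ c, m (a, b, c) := by
  simp only [marginal, Prod.mk.injEq, ite_and, Fintype.sum_prod_type, sum_ite_irrel,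
    sum_const_zero, sum_ite_eq', mem_univ, ↓reduceIte]
  rw [sum_comm]
  simp

end ProductMarginals

section Entropy

variable {V U A : Type*} [Fintype V] [Fintype U] [Fintype A] [DecidableEq U] [DecidableEq A]
  {w : V → ℝ}

lemma shannonEntropy_eq_sum_negMulLog_marginal (f : V → U) :
    shannonEntropy w f = ∑ u, negMulLog (marginal w f u) := rfl

lemma shannonEntropy_comp (f : V → U) (g : U → A) :
    shannonEntropy w (fun v => g (f v)) = shannonEntropy (marginal w f) g := by
  simp only [shannonEntropy_eq_sum_negMulLog_marginal, marginal_comp]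

lemma shannonEntropy_eq_neg_sum_mul_log (f : V → U) :
    shannonEntropy w f = -∑ v, w v * log (marginal w f (f v)) := by
  have h : ∀ u, negMulLog (marginal w f u)
      = -∑ v, if f v = u then w v * log (marginal w f (f v)) else 0 := fun u => by
    rw [negMulLog, marginal, neg_mul, sum_mul]
    congr 1
    refine sum_congr rfl fun v _ => ?_
    split_ifs with hv
    · subst hv
      rfl
    · exact zero_mul _
  simp only [shannonEntropy_eq_sum_negMulLog_marginal, h, sum_neg_distrib]
  rw [sum_comm]
  simp

lemma shannonEntropy_congr_of_fiber {f : V → U} {g : V → A}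
    (h : ∀ v v', f v' = f v ↔ g v' = g v) : shannonEntropy w f = shannonEntropy w g := by
  simp only [shannonEntropy_eq_neg_sum_mul_log, marginal, h]

end Entropy

section Information

variable {V U A B C : Type*} [Fintype V] [Fintype U] [Fintype A] [Fintype B] [Fintype C]
  [DecidableEq U] [DecidableEq A] [DecidableEq B] [DecidableEq C] {w : V → ℝ}

lemma mutualInfo_comp (F : V → U) (X : U → A) (Y : U → B) :
    mutualInfo w (fun v => X (F v)) (fun v => Y (F v)) = mutualInfo (marginal w F) X Y := by
  simp only [mutualInfo]
  rw [shannonEntropy_comp F X, shannonEntropy_comp F Y,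
    shannonEntropy_comp F (fun u => (X u, Y u))]

lemma condMutualInfo_comp (F : V → U) (X : U → A) (Y : U → B) (Z : U → C) :
    condMutualInfo w (fun v => X (F v)) (fun v => Y (F v)) (fun v => Z (F v))
      = condMutualInfo (marginal w F) X Y Z := by
  simp only [condMutualInfo]
  rw [shannonEntropy_comp F (fun u => (X u, Z u)), shannonEntropy_comp F (fun u => (Y u, Z u)),
    shannonEntropy_comp F (fun u => (X u, Y u, Z u)), shannonEntropy_comp F Z]

lemma condMutualInfo_eq_marginal (X : V → A) (Y : V → B) (Z : V → C) :
    condMutualInfo w X Y Z = condMutualInfo (marginal w fun v => (X v, Y v, Z v))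
      (fun t => t.1) (fun t => t.2.1) (fun t => t.2.2) :=
  condMutualInfo_comp (fun v => (X v, Y v, Z v)) (fun t => t.1) (fun t => t.2.1) (fun t => t.2.2)

lemma mutualInfo_congr {W : Type*} [Fintype W] {w' : W → ℝ} {F : V → U} {F' : W → U}
    (h : marginal w F = marginal w' F') (X : U → A) (Y : U → B) :
    mutualInfo w (fun v => X (F v)) (fun v => Y (F v))
      = mutualInfo w' (fun v => X (F' v)) (fun v => Y (F' v)) := by
  rw [mutualInfo_comp F, mutualInfo_comp F', h]

lemma condMutualInfo_congr {W : Type*} [Fintype W] {w' : W → ℝ} {F : V → U} {F' : W → U}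
    (h : marginal w F = marginal w' F') (X : U → A) (Y : U → B) (Z : U → C) :
    condMutualInfo w (fun v => X (F v)) (fun v => Y (F v)) (fun v => Z (F v))
      = condMutualInfo w' (fun v => X (F' v)) (fun v => Y (F' v)) (fun v => Z (F' v)) := by
  rw [condMutualInfo_comp F, condMutualInfo_comp F', h]

lemma mutualInfo_eq_sum (X : V → A) (Y : V → B) :
    mutualInfo w X Y = ∑ v, w v * (log (marginal w (fun v => (X v, Y v)) (X v, Y v))
      - log (marginal w X (X v)) - log (marginal w Y (Y v))) := by
  simp only [mutualInfo, shannonEntropy_eq_neg_sum_mul_log, mul_sub, sum_sub_distrib]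
  ring

lemma condMutualInfo_eq_sum (X : V → A) (Y : V → B) (Z : V → C) :
    condMutualInfo w X Y Z
      = ∑ v, w v * (log (marginal w (fun v => (X v, Y v, Z v)) (X v, Y v, Z v))
        + log (marginal w Z (Z v)) - log (marginal w (fun v => (X v, Z v)) (X v, Z v))
        - log (marginal w (fun v => (Y v, Z v)) (Y v, Z v))) := by
  simp only [condMutualInfo, shannonEntropy_eq_neg_sum_mul_log, mul_sub, mul_add,
    sum_sub_distrib, sum_add_distrib]
  ring

end Information

section Gibbs

open InformationTheory

variable {w u : ℝ}

lemma mul_log_sub_log_sub_sub_eq_mul_klFun (hu : u ≠ 0) :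
    w * (log w - log u) - (w - u) = u * klFun (w / u) := by
  rcases eq_or_ne w 0 with rfl | hw
  · simp [klFun_zero]
  · rw [klFun_apply, log_div hw hu]
    field_simp
    ring

lemma sub_le_mul_log_sub_log (hw : 0 ≤ w) (hu : 0 ≤ u) (hwu : w ≠ 0 → u ≠ 0) :
    w - u ≤ w * (log w - log u) := by
  rcases eq_or_ne u 0 with rfl | hu0
  · simp [not_imp_not.mp hwu rfl]
  · have := mul_nonneg hu (klFun_nonneg (div_nonneg hw hu))
    linarith [mul_log_sub_log_sub_sub_eq_mul_klFun (w := w) hu0]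

lemma eq_of_mul_log_sub_log_le_sub (hw : 0 ≤ w) (hu : 0 ≤ u) (hwu : w ≠ 0 → u ≠ 0)
    (h : w * (log w - log u) ≤ w - u) : w = u := by
  rcases eq_or_ne u 0 with rfl | hu0
  · exact not_imp_not.mp hwu rfl
  · have hkl : u * klFun (w / u) = 0 := by
      have := mul_nonneg hu (klFun_nonneg (div_nonneg hw hu))
      linarith [mul_log_sub_log_sub_sub_eq_mul_klFun (w := w) hu0]
    rw [mul_eq_zero, klFun_eq_zero_iff (div_nonneg hw hu), div_eq_one_iff_eq hu0] at hkl
    exact hkl.resolve_left hu0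

variable {ι : Type*} [Fintype ι] {w u : ι → ℝ}

theorem sum_mul_log_sub_log_nonneg (hw : ∀ i, 0 ≤ w i) (hu : ∀ i, 0 ≤ u i)
    (hwu : ∀ i, w i ≠ 0 → u i ≠ 0) (hsum : ∑ i, u i ≤ ∑ i, w i) :
    0 ≤ ∑ i, w i * (log (w i) - log (u i)) := by
  have := sum_le_sum fun i (_ : i ∈ univ) => sub_le_mul_log_sub_log (hw i) (hu i) (hwu i)
  rw [sum_sub_distrib] at this
  linarith

theorem eq_of_sum_mul_log_sub_log_nonpos (hw : ∀ i, 0 ≤ w i) (hu : ∀ i, 0 ≤ u i)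
    (hwu : ∀ i, w i ≠ 0 → u i ≠ 0) (hsum : ∑ i, u i ≤ ∑ i, w i)
    (h : ∑ i, w i * (log (w i) - log (u i)) ≤ 0) : w = u := by
  have hgap : ∀ i ∈ univ, 0 ≤ w i * (log (w i) - log (u i)) - (w i - u i) := fun i _ => by
    linarith [sub_le_mul_log_sub_log (hw i) (hu i) (hwu i)]
  have hzero : ∑ i, (w i * (log (w i) - log (u i)) - (w i - u i)) = 0 := by
    have hnonneg := sum_nonneg hgap
    rw [sum_sub_distrib, sum_sub_distrib] at hnonneg ⊢
    linarith
  funext i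
  refine eq_of_mul_log_sub_log_le_sub (hw i) (hu i) (hwu i) ?_
  linarith [(sum_eq_zero_iff_of_nonneg hgap).mp hzero i (mem_univ i)]

end Gibbs

section CondIndepExt

variable {A B C : Type*} [Fintype A] [Fintype B] [Fintype C]
  [DecidableEq A] [DecidableEq B] [DecidableEq C] {m : A × B × C → ℝ}

/-- The law under which the first two coordinates are conditionally independent given the third
and the pairs (first, third) and (second, third) keep their laws under `m`. Where the
`C`-marginal vanishes so does the numerator, so division by zero does no harm. -/
noncomputable def condIndepExt (m : A × B × C → ℝ) (t : A × B × C) : ℝ :=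
  marginal m (fun s => (s.1, s.2.2)) (t.1, t.2.2)
    * marginal m (fun s => (s.2.1, s.2.2)) (t.2.1, t.2.2) / marginal m (fun s => s.2.2) t.2.2

lemma condIndepExt_nonneg (hm : ∀ t, 0 ≤ m t) (t : A × B × C) : 0 ≤ condIndepExt m t :=
  div_nonneg (mul_nonneg (marginal_nonneg hm _ _) (marginal_nonneg hm _ _))
    (marginal_nonneg hm _ _)

lemma condIndepExt_ne_zero (hm : ∀ t, 0 ≤ m t) {t : A × B × C} (ht : m t ≠ 0) :
    condIndepExt m t ≠ 0 :=
  div_ne_zero (mul_ne_zero (marginal_ne_zero hm _ ht) (marginal_ne_zero hm _ ht))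
    (marginal_ne_zero hm _ ht)

lemma log_condIndepExt (hm : ∀ t, 0 ≤ m t) {t : A × B × C} (ht : m t ≠ 0) :
    log (condIndepExt m t) = log (marginal m (fun s => (s.1, s.2.2)) (t.1, t.2.2))
      + log (marginal m (fun s => (s.2.1, s.2.2)) (t.2.1, t.2.2))
      - log (marginal m (fun s => s.2.2) t.2.2) := by
  have hAC := marginal_ne_zero hm (fun s => (s.1, s.2.2)) ht
  have hBC := marginal_ne_zero hm (fun s => (s.2.1, s.2.2)) ht
  have hC := marginal_ne_zero hm (fun s => s.2.2) ht
  rw [condIndepExt, log_div (mul_ne_zero hAC hBC) hC, log_mul hAC hBC]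

lemma marginal_condIndepExt_fst_snd_snd (hm : ∀ t, 0 ≤ m t) :
    marginal (condIndepExt m) (fun s => (s.1, s.2.2)) = marginal m (fun s => (s.1, s.2.2)) := by
  ext ⟨a, c⟩
  simp only [marginal_fst_snd_snd_apply (condIndepExt m), condIndepExt]
  rw [← sum_div, ← mul_sum, sum_marginal_pair_left]
  rcases eq_or_ne (marginal m (fun s => s.2.2) c) 0 with hc | hc
  · rw [hc, div_zero, marginal_eq_zero_of_comp hm (g := Prod.snd) hc]
  · exact mul_div_cancel_right₀ _ hc

lemma marginal_condIndepExt_snd (hm : ∀ t, 0 ≤ m t) :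
    marginal (condIndepExt m) (fun s => (s.2.1, s.2.2))
      = marginal m (fun s => (s.2.1, s.2.2)) := by
  ext ⟨b, c⟩
  simp only [marginal_snd_apply (condIndepExt m), condIndepExt]
  rw [← sum_div, ← sum_mul, sum_marginal_pair_left]
  rcases eq_or_ne (marginal m (fun s => s.2.2) c) 0 with hc | hc
  · rw [hc, div_zero, marginal_eq_zero_of_comp hm (g := Prod.snd) hc]
  · exact mul_div_cancel_left₀ _ hc

lemma condIndepExt_congr {m' : A × B × C → ℝ}
    (hAC : marginal m (fun s => (s.1, s.2.2)) = marginal m' (fun s => (s.1, s.2.2)))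
    (hBC : marginal m (fun s => (s.2.1, s.2.2)) = marginal m' (fun s => (s.2.1, s.2.2))) :
    condIndepExt m = condIndepExt m' := by
  have hC : marginal m (fun s => s.2.2) = marginal m' (fun s => s.2.2) := by
    rw [marginal_comp (fun s : A × B × C => (s.2.1, s.2.2)) Prod.snd, hBC, ← marginal_comp]
  ext t
  rw [condIndepExt, condIndepExt, hAC, hBC, hC]

lemma condIndepExt_condIndepExt (hm : ∀ t, 0 ≤ m t) :
    condIndepExt (condIndepExt m) = condIndepExt m :=
  condIndepExt_congr (marginal_condIndepExt_fst_snd_snd hm) (marginal_condIndepExt_snd hm)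

lemma sum_condIndepExt (hm : ∀ t, 0 ≤ m t) : ∑ t, condIndepExt m t = ∑ t, m t := by
  rw [← sum_marginal (fun s => (s.1, s.2.2)), marginal_condIndepExt_fst_snd_snd hm, sum_marginal]

lemma condMutualInfo_eq_sum_mul_log_sub_log_condIndepExt (hm : ∀ t, 0 ≤ m t) :
    condMutualInfo m (fun t => t.1) (fun t => t.2.1) (fun t => t.2.2)
      = ∑ t, m t * (log (m t) - log (condIndepExt m t)) := by
  rw [condMutualInfo_eq_sum]
  refine sum_congr rfl fun t _ => ?_
  rcases eq_or_ne (m t) 0 with ht | ht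
  · simp [ht]
  · rw [log_condIndepExt hm ht, marginal_apply_of_injective (fun _ _ h => h)]
    ring

lemma condMutualInfo_condIndepExt (hm : ∀ t, 0 ≤ m t) :
    condMutualInfo (condIndepExt m) (fun t => t.1) (fun t => t.2.1) (fun t => t.2.2) = 0 := by
  rw [condMutualInfo_eq_sum_mul_log_sub_log_condIndepExt (condIndepExt_nonneg hm),
    condIndepExt_condIndepExt hm]
  simp

end CondIndepExt

section Shannon

variable {V A B C : Type*} [Fintype V] [Fintype A] [Fintype B] [Fintype C]
  [DecidableEq A] [DecidableEq B] [DecidableEq C] {w : V → ℝ}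

theorem condMutualInfo_nonneg (hw : ∀ v, 0 ≤ w v) (X : V → A) (Y : V → B) (Z : V → C) :
    0 ≤ condMutualInfo w X Y Z := by
  have hm := marginal_nonneg hw fun v => (X v, Y v, Z v)
  rw [condMutualInfo_eq_marginal, condMutualInfo_eq_sum_mul_log_sub_log_condIndepExt hm]
  exact sum_mul_log_sub_log_nonneg hm (condIndepExt_nonneg hm)
    (fun t => condIndepExt_ne_zero hm) (sum_condIndepExt hm).le

theorem marginal_eq_condIndepExt_of_condMutualInfo_eq_zero (hw : ∀ v, 0 ≤ w v)
    {X : V → A} {Y : V → B} {Z : V → C} (h : condMutualInfo w X Y Z = 0) :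
    marginal w (fun v => (X v, Y v, Z v))
      = condIndepExt (marginal w fun v => (X v, Y v, Z v)) := by
  have hm := marginal_nonneg hw fun v => (X v, Y v, Z v)
  rw [condMutualInfo_eq_marginal, condMutualInfo_eq_sum_mul_log_sub_log_condIndepExt hm] at h
  exact eq_of_sum_mul_log_sub_log_nonpos hm (condIndepExt_nonneg hm)
    (fun t => condIndepExt_ne_zero hm) (sum_condIndepExt hm).le h.le

lemma mutualInfo_eq_sum_mul_log_sub_log_mul {m : A × B → ℝ} (hm : ∀ t, 0 ≤ m t) :
    mutualInfo m Prod.fst Prod.snd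
      = ∑ t, m t * (log (m t) - log (marginal m Prod.fst t.1 * marginal m Prod.snd t.2)) := by
  rw [mutualInfo_eq_sum]
  refine sum_congr rfl fun t _ => ?_
  rcases eq_or_ne (m t) 0 with ht | ht
  · simp [ht]
  · rw [log_mul (marginal_ne_zero hm _ ht) (marginal_ne_zero hm _ ht),
      marginal_apply_of_injective (fun _ _ h => h)]
    ring

theorem marginal_pair_eq_mul_of_mutualInfo_eq_zero (hw : ∀ v, 0 ≤ w v) (hw1 : ∑ v, w v = 1)
    {X : V → A} {Y : V → B} (h : mutualInfo w X Y = 0) (a : A) (b : B) :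
    marginal w (fun v => (X v, Y v)) (a, b) = marginal w X a * marginal w Y b := by
  set m := marginal w fun v => (X v, Y v)
  have hm : ∀ t, 0 ≤ m t := marginal_nonneg hw _
  have hm1 : ∑ t, m t = 1 := by rw [sum_marginal, hw1]
  have hsum : ∑ t : A × B, marginal m Prod.fst t.1 * marginal m Prod.snd t.2 = ∑ t, m t :=
    calc ∑ t : A × B, marginal m Prod.fst t.1 * marginal m Prod.snd t.2
        = (∑ a, marginal m Prod.fst a) * ∑ b, marginal m Prod.snd b := by
          rw [sum_mul_sum]
          exact Fintype.sum_prod_type _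
      _ = ∑ t, m t := by rw [sum_marginal (w := m), sum_marginal (w := m), hm1, one_mul]
  rw [mutualInfo_comp (fun v => (X v, Y v)) Prod.fst Prod.snd,
    mutualInfo_eq_sum_mul_log_sub_log_mul hm] at h
  have hprod := eq_of_sum_mul_log_sub_log_nonpos hm
    (fun t => mul_nonneg (marginal_nonneg hm _ _) (marginal_nonneg hm _ _))
    (fun t ht => mul_ne_zero (marginal_ne_zero hm _ ht) (marginal_ne_zero hm _ ht)) hsum.le h.le
  rw [marginal_comp (fun v => (X v, Y v)) Prod.fst, marginal_comp (fun v => (X v, Y v)) Prod.snd]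
  exact congrFun hprod (a, b)

/-- The difference of the two sides is `I(X₁;X₂|X₄) + I(X₃;X₄|X₁,X₂)`. -/
theorem mutualInfo_add_condMutualInfo_le {D : Type*} [Fintype D] [DecidableEq D]
    (hw : ∀ v, 0 ≤ w v) (X₁ : V → A) (X₂ : V → B) (X₃ : V → C) (X₄ : V → D) :
    mutualInfo w X₃ X₄ + condMutualInfo w X₁ X₂ X₃
      ≤ condMutualInfo w X₃ X₄ X₁ + condMutualInfo w X₃ X₄ X₂ + mutualInfo w X₁ X₂
        + condMutualInfo w X₁ X₂ (fun v => (X₃ v, X₄ v)) := by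
  have h124 := condMutualInfo_nonneg hw X₁ X₂ X₄
  have h3412 := condMutualInfo_nonneg hw X₃ X₄ fun v => (X₁ v, X₂ v)
  have e31 : shannonEntropy w (fun v => (X₃ v, X₁ v))
      = shannonEntropy w (fun v => (X₁ v, X₃ v)) :=
    shannonEntropy_congr_of_fiber fun _ _ => by simp only [Prod.mk.injEq]; tauto
  have e32 : shannonEntropy w (fun v => (X₃ v, X₂ v))
      = shannonEntropy w (fun v => (X₂ v, X₃ v)) :=
    shannonEntropy_congr_of_fiber fun _ _ => by simp only [Prod.mk.injEq]; tauto
  have e41 : shannonEntropy w (fun v => (X₄ v, X₁ v))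
      = shannonEntropy w (fun v => (X₁ v, X₄ v)) :=
    shannonEntropy_congr_of_fiber fun _ _ => by simp only [Prod.mk.injEq]; tauto
  have e42 : shannonEntropy w (fun v => (X₄ v, X₂ v))
      = shannonEntropy w (fun v => (X₂ v, X₄ v)) :=
    shannonEntropy_congr_of_fiber fun _ _ => by simp only [Prod.mk.injEq]; tauto
  have e341 : shannonEntropy w (fun v => (X₃ v, X₄ v, X₁ v))
      = shannonEntropy w (fun v => (X₁ v, X₃ v, X₄ v)) :=
    shannonEntropy_congr_of_fiber fun _ _ => by simp only [Prod.mk.injEq]; tauto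
  have e342 : shannonEntropy w (fun v => (X₃ v, X₄ v, X₂ v))
      = shannonEntropy w (fun v => (X₂ v, X₃ v, X₄ v)) :=
    shannonEntropy_congr_of_fiber fun _ _ => by simp only [Prod.mk.injEq]; tauto
  have e312 : shannonEntropy w (fun v => (X₃ v, X₁ v, X₂ v))
      = shannonEntropy w (fun v => (X₁ v, X₂ v, X₃ v)) :=
    shannonEntropy_congr_of_fiber fun _ _ => by simp only [Prod.mk.injEq]; tauto
  have e412 : shannonEntropy w (fun v => (X₄ v, X₁ v, X₂ v))
      = shannonEntropy w (fun v => (X₁ v, X₂ v, X₄ v)) :=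
    shannonEntropy_congr_of_fiber fun _ _ => by simp only [Prod.mk.injEq]; tauto
  have e3412 : shannonEntropy w (fun v => (X₃ v, X₄ v, X₁ v, X₂ v))
      = shannonEntropy w (fun v => (X₁ v, X₂ v, X₃ v, X₄ v)) :=
    shannonEntropy_congr_of_fiber fun _ _ => by simp only [Prod.mk.injEq]; tauto
  simp only [mutualInfo, condMutualInfo] at *
  linarith

end Shannon

section ZhangYeung

variable {A B C : Type*} [Fintype A] [Fintype B] [Fintype C]
  [DecidableEq A] [DecidableEq B] [DecidableEq C]

/-- Gibbs' inequality against `u = condIndepExt j * j_AB / (j_A * j_B)`: by `h` its total mass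
is at most that of `j`, and the divergence of `j` from `u` is `I(A;B|C) - I(A;B)`. -/
theorem mutualInfo_le_condMutualInfo_of_sum_condIndepExt {j : A × B × C → ℝ}
    (hj : ∀ t, 0 ≤ j t)
    (h : ∀ a b, ∑ c, condIndepExt j (a, b, c)
      = marginal j (fun t => t.1) a * marginal j (fun t => t.2.1) b) :
    mutualInfo j (fun t => t.1) (fun t => t.2.1)
      ≤ condMutualInfo j (fun t => t.1) (fun t => t.2.1) (fun t => t.2.2) := by
  set jA := marginal j fun t => t.1
  set jB := marginal j fun t => t.2.1
  set jAB := marginal j fun t => (t.1, t.2.1)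
  set u : A × B × C → ℝ := fun t => condIndepExt j t * jAB (t.1, t.2.1) / (jA t.1 * jB t.2.1)
  have hu : ∀ t, 0 ≤ u t := fun t => div_nonneg
    (mul_nonneg (condIndepExt_nonneg hj t) (marginal_nonneg hj _ _))
    (mul_nonneg (marginal_nonneg hj _ _) (marginal_nonneg hj _ _))
  have hju : ∀ t, j t ≠ 0 → u t ≠ 0 := fun t ht => div_ne_zero
    (mul_ne_zero (condIndepExt_ne_zero hj ht) (marginal_ne_zero hj _ ht))
    (mul_ne_zero (marginal_ne_zero hj _ ht) (marginal_ne_zero hj _ ht))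
  have hsum : ∑ t, u t ≤ ∑ t, j t := calc
    ∑ t, u t = ∑ a, ∑ b, (jA a * jB b) * jAB (a, b) / (jA a * jB b) := by
        simp only [Fintype.sum_prod_type, ← h, sum_mul, sum_div, u]
    _ ≤ ∑ a, ∑ b, jAB (a, b) := by
        refine sum_le_sum fun a _ => sum_le_sum fun b _ => ?_
        rcases eq_or_ne (jA a * jB b) 0 with h0 | h0
        · simpa [h0] using marginal_nonneg hj _ _
        · rw [mul_div_cancel_left₀ _ h0]
    _ = ∑ t, j t := by rw [← Fintype.sum_prod_type, sum_marginal]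
  have hgap : condMutualInfo j (fun t => t.1) (fun t => t.2.1) (fun t => t.2.2)
      - mutualInfo j (fun t => t.1) (fun t => t.2.1) = ∑ t, j t * (log (j t) - log (u t)) := by
    rw [condMutualInfo_eq_sum, mutualInfo_eq_sum, ← sum_sub_distrib]
    refine sum_congr rfl fun t _ => ?_
    rcases eq_or_ne (j t) 0 with ht | ht
    · simp [ht]
    · have hext := condIndepExt_ne_zero hj ht
      have hAB : jAB (t.1, t.2.1) ≠ 0 := marginal_ne_zero hj _ ht
      have hA : jA t.1 ≠ 0 := marginal_ne_zero hj _ ht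
      have hB : jB t.2.1 ≠ 0 := marginal_ne_zero hj _ ht
      simp only [u]
      rw [log_div (mul_ne_zero hext hAB) (mul_ne_zero hA hB), log_mul hext hAB, log_mul hA hB,
        log_condIndepExt hj ht, marginal_apply_of_injective (fun _ _ h => h)]
      ring
  linarith [sum_mul_log_sub_log_nonneg hj hu hju hsum]

theorem mutualInfo_le_condMutualInfo_of_marginal_eq {V W : Type*} [Fintype V] [Fintype W]
    {w : V → ℝ} {w' : W → ℝ} (hw : ∀ v, 0 ≤ w v) (hw' : ∀ v, 0 ≤ w' v) (hw'1 : ∑ v, w' v = 1)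
    {X : V → A} {Y : V → B} {Z : V → C} {X' : W → A} {Y' : W → B} {Z' : W → C}
    (hXZ : marginal w (fun v => (X v, Z v)) = marginal w' (fun v => (X' v, Z' v)))
    (hYZ : marginal w (fun v => (Y v, Z v)) = marginal w' (fun v => (Y' v, Z' v)))
    (hI : mutualInfo w' X' Y' = 0) (hI' : condMutualInfo w' X' Y' Z' = 0) :
    mutualInfo w X Y ≤ condMutualInfo w X Y Z := by
  set j := marginal w fun v => (X v, Y v, Z v)
  have hX : marginal j (fun t => t.1) = marginal w' X' :=
    (marginal_comp (fun v => (X v, Y v, Z v)) _).symm.trans (marginal_comp_eq_of_eq hXZ Prod.fst)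
  have hY : marginal j (fun t => t.2.1) = marginal w' Y' :=
    (marginal_comp (fun v => (X v, Y v, Z v)) _).symm.trans (marginal_comp_eq_of_eq hYZ Prod.fst)
  have hext : condIndepExt j = marginal w' fun v => (X' v, Y' v, Z' v) := by
    refine (condIndepExt_congr ?_ ?_).trans
      (marginal_eq_condIndepExt_of_condMutualInfo_eq_zero hw' hI').symm
    · rw [← marginal_comp, ← marginal_comp]
      exact hXZ
    · rw [← marginal_comp, ← marginal_comp]
      exact hYZ
  have hsum : ∀ a b, ∑ c, condIndepExt j (a, b, c)
      = marginal j (fun t => t.1) a * marginal j (fun t => t.2.1) b := fun a b => by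
    rw [hext, hX, hY, ← marginal_fst_snd_fst_apply, ← marginal_comp,
      ← marginal_pair_eq_mul_of_mutualInfo_eq_zero hw' hw'1 hI]
  rw [condMutualInfo_eq_marginal, mutualInfo_comp (fun v => (X v, Y v, Z v)) (fun t => t.1)
    (fun t => t.2.1)]
  exact mutualInfo_le_condMutualInfo_of_sum_condIndepExt (marginal_nonneg hw _) hsum

end ZhangYeung

theorem stmt_16 {Ω S₁ S₂ S₃ S₄ : Type*} [Fintype Ω]
    [Fintype S₁] [Fintype S₂] [Fintype S₃] [Fintype S₄]
    [DecidableEq S₁] [DecidableEq S₂] [DecidableEq S₃] [DecidableEq S₄]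
    (p : Ω → ℝ) (hp : ∀ ω, 0 ≤ p ω) (hp1 : ∑ ω, p ω = 1)
    (X₁ : Ω → S₁) (X₂ : Ω → S₂) (X₃ : Ω → S₃) (X₄ : Ω → S₄)
    (h12 : mutualInfo p X₁ X₂ = 0) (h12c3 : condMutualInfo p X₁ X₂ X₃ = 0) :
    mutualInfo p X₃ X₄ ≤ condMutualInfo p X₃ X₄ X₁ + condMutualInfo p X₃ X₄ X₂ := by
  have hr := marginal_nonneg hp fun ω => (X₁ ω, X₂ ω, X₃ ω, X₄ ω)
  set q := condIndepExt (marginal p fun ω => (X₁ ω, X₂ ω, X₃ ω, X₄ ω))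
  have hq : ∀ v, 0 ≤ q v := condIndepExt_nonneg hr
  have h134 : marginal q (fun v => (v.1, v.2.2)) = marginal p (fun ω => (X₁ ω, X₃ ω, X₄ ω)) :=
    (marginal_condIndepExt_fst_snd_snd hr).trans (marginal_comp _ _).symm
  have h234 : marginal q (fun v => (v.2.1, v.2.2)) = marginal p (fun ω => (X₂ ω, X₃ ω, X₄ ω)) :=
    (marginal_condIndepExt_snd hr).trans (marginal_comp _ _).symm
  have hkey : mutualInfo q (fun v => v.1) (fun v => v.2.1)
      ≤ condMutualInfo q (fun v => v.1) (fun v => v.2.1) (fun v => v.2.2.1) :=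
    mutualInfo_le_condMutualInfo_of_marginal_eq hq hp hp1
      (marginal_comp_eq_of_eq h134 fun y => (y.1, y.2.1))
      (marginal_comp_eq_of_eq h234 fun y => (y.1, y.2.1)) h12 h12c3
  have hci : condMutualInfo q (fun v => v.1) (fun v => v.2.1) (fun v => (v.2.2.1, v.2.2.2)) = 0 :=
    condMutualInfo_condIndepExt hr
  have e34 : mutualInfo q (fun v => v.2.2.1) (fun v => v.2.2.2) = mutualInfo p X₃ X₄ :=
    mutualInfo_congr h134 (fun y => y.2.1) (fun y => y.2.2)
  have e34_1 : condMutualInfo q (fun v => v.2.2.1) (fun v => v.2.2.2) (fun v => v.1)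
      = condMutualInfo p X₃ X₄ X₁ :=
    condMutualInfo_congr h134 (fun y => y.2.1) (fun y => y.2.2) (fun y => y.1)
  have e34_2 : condMutualInfo q (fun v => v.2.2.1) (fun v => v.2.2.2) (fun v => v.2.1)
      = condMutualInfo p X₃ X₄ X₂ :=
    condMutualInfo_congr h234 (fun y => y.2.1) (fun y => y.2.2) (fun y => y.1)
  linarith [mutualInfo_add_condMutualInfo_le hq (fun v => v.1) (fun v => v.2.1)
    (fun v => v.2.2.1) (fun v => v.2.2.2)]
end

section
/- For any four discrete random variables X₁, X₂, X₃, X₄ (on a finite probability space): 2·I(X₃;X₄) ≤ I(X₁;X₂) + I(X₁;X₃,X₄) + 3·I(X₃;X₄|X₁) + I(X₃;X₄|X₂). -/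
/-!
Put `F = (X₃, X₄)` and weight a pair `(a, b) ∈ Ω × Ω` by `p a * p b / P(F = F a)` when
`F a = F b`. Variables read off the first coordinate keep their joint law, and `Z := X₁ ∘ snd`
is a copy of `X₁` over `F`: `(Z, X₃, X₄)` has the law of `(X₁, X₃, X₄)` and
`I(Z; X₁, X₂ | X₃, X₄) = 0`. Given these two facts, the Zhang–Yeung inequality for
`X₁, …, X₄` is a sum of ten instances of `I(·;·|·) ≥ 0` among the five variables.
-/

open Finset Real

section Law

variable {Ω Ω' S T : Type*} [Fintype Ω] [DecidableEq S]

noncomputable def law (p : Ω → ℝ) (X : Ω → S) (s : S) : ℝ :=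
  ∑ ω, if X ω = s then p ω else 0

theorem law_nonneg {p : Ω → ℝ} (hp : ∀ ω, 0 ≤ p ω) (X : Ω → S) (s : S) : 0 ≤ law p X s :=
  sum_nonneg fun ω _ => by split_ifs <;> simp [hp ω]

theorem law_le_law_of_imp [DecidableEq T] {p : Ω → ℝ} (hp : ∀ ω, 0 ≤ p ω)
    {X : Ω → S} {Y : Ω → T} {s : S} {t : T} (h : ∀ ω, X ω = s → Y ω = t) : law p X s ≤ law p Y t :=
  sum_le_sum fun ω _ => by
    by_cases hX : X ω = s
    · simp [hX, h ω hX]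
    · simp only [hX, if_false]
      split_ifs <;> simp [hp ω]

theorem le_law_self {p : Ω → ℝ} (hp : ∀ ω, 0 ≤ p ω) (X : Ω → S) (ω : Ω) :
    p ω ≤ law p X (X ω) := by
  unfold law
  simpa using single_le_sum (f := fun ω' => if X ω' = X ω then p ω' else 0)
    (fun ω' _ => by split_ifs <;> simp [hp ω']) (mem_univ ω)

theorem law_self_pos {p : Ω → ℝ} (hp : ∀ ω, 0 ≤ p ω) {ω : Ω} (hω : 0 < p ω) (X : Ω → S) :
    0 < law p X (X ω) :=
  hω.trans_le (le_law_self hp X ω)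

theorem sum_law_mul [Fintype S] (p : Ω → ℝ) (X : Ω → S) (φ : S → ℝ) :
    ∑ s, law p X s * φ s = ∑ ω, p ω * φ (X ω) := by
  simp only [law, sum_mul, ite_mul, zero_mul]
  rw [sum_comm]
  simp

theorem sum_law [Fintype S] (p : Ω → ℝ) (X : Ω → S) : ∑ s, law p X s = ∑ ω, p ω := by
  simpa using sum_law_mul p X 1

theorem law_comp [Fintype Ω'] [DecidableEq Ω'] (p : Ω → ℝ) (f : Ω → Ω') (V : Ω' → S) :
    law p (V ∘ f) = law (law p f) V := by
  ext t
  simp only [law, Function.comp_apply]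
  simp_rw [ite_sum_zero, ← ite_and]
  rw [sum_comm]
  refine sum_congr rfl fun ω _ => ?_
  simp_rw [and_comm (a := V _ = t), ite_and, sum_ite_eq, mem_univ, if_true]

theorem shannonEntropy_eq_neg_sum [Fintype S] (p : Ω → ℝ) (X : Ω → S) :
    shannonEntropy p X = -∑ ω, p ω * log (law p X (X ω)) := by
  rw [← sum_law_mul p X (fun s => log (law p X s)), ← sum_neg_distrib]
  simp only [shannonEntropy, negMulLog, neg_mul]
  rfl

variable [Fintype S] [Fintype Ω'] [DecidableEq Ω']

theorem shannonEntropy_comp_s17 (p : Ω → ℝ) (f : Ω → Ω') (V : Ω' → S) :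
    shannonEntropy p (V ∘ f) = shannonEntropy (law p f) V := by
  simp only [shannonEntropy]
  exact congrArg (fun μ => ∑ s, negMulLog (μ s)) (law_comp p f V)

theorem shannonEntropy_comp_eq_of_law_eq {p : Ω → ℝ} {X Y : Ω → Ω'} (h : law p X = law p Y)
    (g : Ω' → S) : shannonEntropy p (g ∘ X) = shannonEntropy p (g ∘ Y) := by
  rw [shannonEntropy_comp_s17, shannonEntropy_comp_s17, h]

end Law

section Transfer

variable {Ω Ω' S₁ S₂ S₃ : Type*} [Fintype Ω] [Fintype Ω'] [DecidableEq Ω']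
  [Fintype S₁] [Fintype S₂] [Fintype S₃] [DecidableEq S₁] [DecidableEq S₂] [DecidableEq S₃]

theorem mutualInfo_comp_s17 (p : Ω → ℝ) (f : Ω → Ω') (X : Ω' → S₁) (Y : Ω' → S₂) :
    mutualInfo p (X ∘ f) (Y ∘ f) = mutualInfo (law p f) X Y := by
  simp only [mutualInfo, ← shannonEntropy_comp_s17]
  rfl

theorem condMutualInfo_comp_s17 (p : Ω → ℝ) (f : Ω → Ω') (X : Ω' → S₁) (Y : Ω' → S₂)
    (Z : Ω' → S₃) :
    condMutualInfo p (X ∘ f) (Y ∘ f) (Z ∘ f) = condMutualInfo (law p f) X Y Z := by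
  simp only [condMutualInfo, ← shannonEntropy_comp_s17]
  rfl

end Transfer

section Partition

variable {Ω S : Type*} [Fintype Ω]

open Classical in
noncomputable def partitionEntropy (p : Ω → ℝ) (r : Ω → Ω → Prop) : ℝ :=
  -∑ ω, p ω * log (∑ ω', if r ω ω' then p ω' else 0)

theorem shannonEntropy_eq_partitionEntropy [Fintype S] [DecidableEq S] (p : Ω → ℝ)
    (X : Ω → S) : shannonEntropy p X = partitionEntropy p (fun ω ω' => X ω = X ω') := by
  simp only [shannonEntropy_eq_neg_sum, partitionEntropy, law, eq_comm]
  congr!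

end Partition

section Coupling

variable {Ω V S T : Type*} [Fintype Ω] [DecidableEq V] [DecidableEq S] [DecidableEq T]

/-- Two copies of `ω` that agree on `F` and are conditionally independent given `F`. -/
noncomputable def condIndepCoupling (p : Ω → ℝ) (F : Ω → V) (w : Ω × Ω) : ℝ :=
  if F w.1 = F w.2 then p w.1 * p w.2 / law p F (F w.1) else 0

variable {p : Ω → ℝ}

theorem condIndepCoupling_nonneg (hp : ∀ ω, 0 ≤ p ω) (F : Ω → V) (w : Ω × Ω) :
    0 ≤ condIndepCoupling p F w := by
  unfold condIndepCoupling
  split_ifs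
  · exact div_nonneg (mul_nonneg (hp _) (hp _)) (law_nonneg hp _ _)
  · rfl

theorem law_condIndepCoupling_fst [DecidableEq Ω] (hp : ∀ ω, 0 ≤ p ω) (F : Ω → V) :
    law (condIndepCoupling p F) Prod.fst = p := by
  ext a
  rw [law, Fintype.sum_prod_type, sum_eq_single a (fun b _ hb => by simp [hb]) (by simp)]
  simp only [if_true, condIndepCoupling]
  have hmarg : ∑ b, (if F a = F b then p a * p b / law p F (F a) else 0)
      = p a / law p F (F a) * law p F (F a) := by
    rw [law.eq_1 p F (F a), mul_sum]
    refine sum_congr rfl fun b _ => ?_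
    by_cases hb : F b = F a <;> simp [hb, eq_comm (a := F a), mul_div_right_comm]
  rw [hmarg]
  by_cases h : law p F (F a) = 0
  · simp [h, le_antisymm (h ▸ le_law_self hp F a) (hp a)]
  · exact div_mul_cancel₀ _ h

theorem law_condIndepCoupling_comp_fst (hp : ∀ ω, 0 ≤ p ω) (F : Ω → V) (W : Ω → T) :
    law (condIndepCoupling p F) (fun w => W w.1) = law p W := by
  classical
  exact (law_comp _ Prod.fst W).trans (by rw [law_condIndepCoupling_fst hp])

theorem law_condIndepCoupling (p : Ω → ℝ) (F : Ω → V) (X : Ω → S) (W : Ω → T) (G : T → V)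
    (hG : ∀ ω, G (W ω) = F ω) (s : S) (t : T) :
    law (condIndepCoupling p F) (fun w => (X w.2, W w.1)) (s, t)
      = law p W t * (law p (fun ω => (X ω, F ω)) (s, G t) / law p F (G t)) := by
  rw [law, law.eq_1 p W, Fintype.sum_prod_type, sum_mul]
  refine sum_congr rfl fun a _ => ?_
  by_cases ha : W a = t
  · have hFa : F a = G t := (hG a).symm.trans (congrArg G ha)
    simp only [condIndepCoupling, Prod.mk.injEq, ha, and_true, if_true, hFa]
    rw [law.eq_1 p (fun ω => (X ω, F ω)), sum_div, mul_sum]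
    refine sum_congr rfl fun b _ => ?_
    by_cases hb : F b = G t <;> by_cases hx : X b = s <;>
      simp [hb, hx, eq_comm (a := G t), mul_div_assoc]
  · simp [ha]

theorem law_condIndepCoupling_copy (hp : ∀ ω, 0 ≤ p ω) (F : Ω → V) (X : Ω → S) :
    law (condIndepCoupling p F) (fun w => (X w.2, F w.1)) = law p (fun ω => (X ω, F ω)) := by
  ext ⟨s, v⟩
  rw [law_condIndepCoupling p F X F id (fun _ => rfl)]
  by_cases h : law p F v = 0
  · have hXF : law p (fun ω => (X ω, F ω)) (s, v) ≤ law p F v :=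
      law_le_law_of_imp hp fun ω h => (Prod.mk.inj h).2
    rw [h, zero_mul]
    exact (le_antisymm (h ▸ hXF) (law_nonneg hp _ _)).symm
  · exact mul_div_cancel₀ _ h

end Coupling

section CondMutualInfo

variable {Ω S₁ S₂ S₃ T : Type*} [Fintype Ω] [Fintype S₁] [Fintype S₂] [Fintype S₃]
  [DecidableEq S₁] [DecidableEq S₂] [DecidableEq S₃] {p : Ω → ℝ}

theorem sum_mul_log_law_div_nonneg [Fintype T] [DecidableEq T] (hp : ∀ ω, 0 ≤ p ω)
    (V : Ω → T) {μ : T → ℝ} (hμ : ∀ t, 0 ≤ μ t) (hμp : ∑ t, μ t ≤ ∑ ω, p ω)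
    (hsupp : ∀ ω, p ω ≠ 0 → μ (V ω) ≠ 0) :
    0 ≤ ∑ ω, p ω * log (law p V (V ω) / μ (V ω)) := by
  have hterm (ω : Ω) :
      p ω - p ω * (μ (V ω) / law p V (V ω)) ≤ p ω * log (law p V (V ω) / μ (V ω)) := by
    rcases (hp ω).eq_or_lt with h | h
    · simp [← h]
    have hm : 0 < law p V (V ω) := h.trans_le (le_law_self hp V ω)
    have hμω : 0 < μ (V ω) := (hμ _).lt_of_ne' (hsupp ω h.ne')
    have hlog := log_le_sub_one_of_pos (div_pos hμω hm)
    rw [← neg_neg (log _), ← log_inv, inv_div] at hlog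
    nlinarith [mul_le_mul_of_nonneg_left hlog h.le]
  have hmass : ∑ ω, p ω * (μ (V ω) / law p V (V ω)) ≤ ∑ ω, p ω := by
    rw [← sum_law_mul p V (fun t => μ t / law p V t)]
    refine (sum_le_sum fun t _ => ?_).trans hμp
    by_cases h : law p V t = 0
    · simp [h, hμ t]
    · rw [mul_div_cancel₀ _ h]
  calc 0 ≤ ∑ ω, p ω - ∑ ω, p ω * (μ (V ω) / law p V (V ω)) := sub_nonneg.2 hmass
    _ = ∑ ω, (p ω - p ω * (μ (V ω) / law p V (V ω))) := (sum_sub_distrib ..).symm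
    _ ≤ _ := sum_le_sum fun ω _ => hterm ω

theorem condMutualInfo_eq_sum_s17 (hp : ∀ ω, 0 ≤ p ω) (X : Ω → S₁) (Y : Ω → S₂) (Z : Ω → S₃) :
    condMutualInfo p X Y Z = ∑ ω, p ω * log
      (law p (fun ω => (X ω, Y ω, Z ω)) (X ω, Y ω, Z ω) * law p Z (Z ω) /
        (law p (fun ω => (X ω, Z ω)) (X ω, Z ω) * law p (fun ω => (Y ω, Z ω)) (Y ω, Z ω))) := by
  have hsplit (ω : Ω) : p ω * log
      (law p (fun ω => (X ω, Y ω, Z ω)) (X ω, Y ω, Z ω) * law p Z (Z ω) /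
        (law p (fun ω => (X ω, Z ω)) (X ω, Z ω) * law p (fun ω => (Y ω, Z ω)) (Y ω, Z ω)))
      = p ω * log (law p (fun ω => (X ω, Y ω, Z ω)) (X ω, Y ω, Z ω))
        + p ω * log (law p Z (Z ω)) - p ω * log (law p (fun ω => (X ω, Z ω)) (X ω, Z ω))
        - p ω * log (law p (fun ω => (Y ω, Z ω)) (Y ω, Z ω)) := by
    rcases (hp ω).eq_or_lt with h | h
    · simp [← h]
    have h₁ := (law_self_pos hp h fun ω => (X ω, Y ω, Z ω)).ne'
    have h₂ := (law_self_pos hp h Z).ne'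
    have h₃ := (law_self_pos hp h fun ω => (X ω, Z ω)).ne'
    have h₄ := (law_self_pos hp h fun ω => (Y ω, Z ω)).ne'
    rw [log_div (mul_ne_zero h₁ h₂) (mul_ne_zero h₃ h₄), log_mul h₁ h₂, log_mul h₃ h₄]
    ring
  simp only [hsplit, sum_add_distrib, sum_sub_distrib, condMutualInfo, shannonEntropy_eq_neg_sum]
  ring

theorem condMutualInfo_nonneg_s17 (hp : ∀ ω, 0 ≤ p ω) (X : Ω → S₁) (Y : Ω → S₂) (Z : Ω → S₃) :
    0 ≤ condMutualInfo p X Y Z := by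
  -- `I(X;Y|Z)` is the relative entropy of the law of `(X, Y, Z)` with respect to that of
  -- `(X', Y, Z)`, where `X'` is a conditionally independent copy of `X` over `Z`.
  classical
  set q := condIndepCoupling p Z
  have hμ (x : S₁) (y : S₂) (z : S₃) : law q (fun w => (X w.2, Y w.1, Z w.1)) (x, y, z)
      = law p (fun ω => (Y ω, Z ω)) (y, z) * (law p (fun ω => (X ω, Z ω)) (x, z) / law p Z z) :=
    law_condIndepCoupling p Z X (fun ω => (Y ω, Z ω)) Prod.snd (fun _ => rfl) x (y, z)
  rw [condMutualInfo_eq_sum_s17 hp]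
  convert sum_mul_log_law_div_nonneg hp (fun ω => (X ω, Y ω, Z ω))
    (μ := law q (fun w => (X w.2, Y w.1, Z w.1)))
    (law_nonneg (condIndepCoupling_nonneg hp Z) _) ?_ ?_ using 4 with ω
  · rw [hμ]
    simp only [div_eq_mul_inv, mul_inv, inv_inv]
    ring
  · rw [sum_law, ← sum_law q Prod.fst, law_condIndepCoupling_fst hp]
  · intro ω hω
    have hω' := (hp ω).lt_of_ne' hω
    rw [hμ]
    exact mul_ne_zero (law_self_pos hp hω' _).ne'
      (div_ne_zero (law_self_pos hp hω' _).ne' (law_self_pos hp hω' _).ne')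

theorem condMutualInfo_eq_zero_of_law_mul (hp : ∀ ω, 0 ≤ p ω) {X : Ω → S₁} {Y : Ω → S₂}
    {Z : Ω → S₃} (h : ∀ x y z, law p (fun ω => (X ω, Y ω, Z ω)) (x, y, z) * law p Z z
      = law p (fun ω => (X ω, Z ω)) (x, z) * law p (fun ω => (Y ω, Z ω)) (y, z)) :
    condMutualInfo p X Y Z = 0 := by
  rw [condMutualInfo_eq_sum_s17 hp]
  exact sum_eq_zero fun ω _ => by rw [h, log_div_self, mul_zero]

theorem condMutualInfo_condIndepCoupling {V : Type*} [Fintype V] [DecidableEq V]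
    [Fintype T] [DecidableEq T] (hp : ∀ ω, 0 ≤ p ω) (F : Ω → V) (X : Ω → S₁) (W : Ω → T) :
    condMutualInfo (condIndepCoupling p F) (fun w => X w.2) (fun w => W w.1) (fun w => F w.1)
      = 0 := by
  refine condMutualInfo_eq_zero_of_law_mul (condIndepCoupling_nonneg hp F) fun x t v => ?_
  have hXWF : law (condIndepCoupling p F) (fun w => (X w.2, W w.1, F w.1)) (x, t, v)
      = law p (fun ω => (W ω, F ω)) (t, v) * (law p (fun ω => (X ω, F ω)) (x, v) / law p F v) :=
    law_condIndepCoupling p F X (fun ω => (W ω, F ω)) Prod.snd (fun _ => rfl) x (t, v)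
  rw [hXWF, law_condIndepCoupling p F X F id (fun _ => rfl), law_condIndepCoupling_comp_fst hp,
    law_condIndepCoupling_comp_fst hp F (fun ω => (W ω, F ω)), id]
  ring

end CondMutualInfo

theorem zhangYeung_of_condIndepCopy {Ω S₁ S₂ S₃ S₄ : Type*} [Fintype Ω]
    [Fintype S₁] [Fintype S₂] [Fintype S₃] [Fintype S₄]
    [DecidableEq S₁] [DecidableEq S₂] [DecidableEq S₃] [DecidableEq S₄]
    {p : Ω → ℝ} (hp : ∀ ω, 0 ≤ p ω)
    (A : Ω → S₁) (B : Ω → S₂) (C : Ω → S₃) (D : Ω → S₄) (Z : Ω → S₁)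
    (hcopy : law p (fun ω => (Z ω, C ω, D ω)) = law p (fun ω => (A ω, C ω, D ω)))
    (hindep : condMutualInfo p Z (fun ω => (A ω, B ω)) (fun ω => (C ω, D ω)) = 0) :
    2 * mutualInfo p C D ≤ mutualInfo p A B + mutualInfo p A (fun ω => (C ω, D ω)) +
        3 * condMutualInfo p C D A + condMutualInfo p C D B := by
  have hZ := shannonEntropy_comp_eq_of_law_eq hcopy Prod.fst
  have hZC := shannonEntropy_comp_eq_of_law_eq hcopy fun t => (t.1, t.2.1)
  have hZD := shannonEntropy_comp_eq_of_law_eq hcopy fun t => (t.1, t.2.2)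
  have hZCD := shannonEntropy_comp_eq_of_law_eq hcopy id
  -- Given the copy identities, the Zhang–Yeung gap is exactly the sum of these ten terms.
  have := condMutualInfo_nonneg_s17 hp A Z C
  have := condMutualInfo_nonneg_s17 hp A Z D
  have := condMutualInfo_nonneg_s17 hp B Z C
  have := condMutualInfo_nonneg_s17 hp B Z D
  have := condMutualInfo_nonneg_s17 hp A B Z
  have := condMutualInfo_nonneg_s17 hp C D (fun ω => (Z ω, A ω))
  have := condMutualInfo_nonneg_s17 hp C D (fun ω => (Z ω, B ω))
  have := condMutualInfo_nonneg_s17 hp A Z (fun ω => (B ω, C ω, D ω))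
  have := condMutualInfo_nonneg_s17 hp B Z (fun ω => (A ω, C ω, D ω))
  have := condMutualInfo_nonneg_s17 hp (fun ω => (C ω, D ω)) Z (fun ω => (A ω, B ω))
  -- As entropies of partitions, joint entropies that differ only in the order or bracketing
  -- of their components become equal once `∧` is AC-normalised.
  simp only [Function.comp_def, id, condMutualInfo, mutualInfo, shannonEntropy_eq_partitionEntropy,
    Prod.mk.injEq, and_comm, and_left_comm, and_assoc] at *
  linarith

theorem stmt_17_general {Ω S₁ S₂ S₃ S₄ : Type*} [Fintype Ω]
    [Fintype S₁] [Fintype S₂] [Fintype S₃] [Fintype S₄]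
    [DecidableEq S₁] [DecidableEq S₂] [DecidableEq S₃] [DecidableEq S₄]
    (p : Ω → ℝ) (hp : ∀ ω, 0 ≤ p ω)
    (X₁ : Ω → S₁) (X₂ : Ω → S₂) (X₃ : Ω → S₃) (X₄ : Ω → S₄) :
    2 * mutualInfo p X₃ X₄ ≤
      mutualInfo p X₁ X₂ + mutualInfo p X₁ (fun ω => (X₃ ω, X₄ ω)) +
        3 * condMutualInfo p X₃ X₄ X₁ + condMutualInfo p X₃ X₄ X₂ := by
  classical
  set F := fun ω => (X₃ ω, X₄ ω)
  have key := zhangYeung_of_condIndepCopy (condIndepCoupling_nonneg hp F)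
    (X₁ ∘ Prod.fst) (X₂ ∘ Prod.fst) (X₃ ∘ Prod.fst) (X₄ ∘ Prod.fst) (X₁ ∘ Prod.snd)
    ((law_condIndepCoupling_copy hp F X₁).trans
      (law_condIndepCoupling_comp_fst hp F fun ω => (X₁ ω, F ω)).symm)
    (condMutualInfo_condIndepCoupling hp F X₁ fun ω => (X₁ ω, X₂ ω))
  rw [show (fun w => ((X₃ ∘ Prod.fst) w, (X₄ ∘ Prod.fst) w)) = F ∘ Prod.fst from rfl] at key
  simpa only [mutualInfo_comp_s17, condMutualInfo_comp_s17, law_condIndepCoupling_fst hp] using key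

theorem stmt_17 {Ω S₁ S₂ S₃ S₄ : Type*} [Fintype Ω]
    [Fintype S₁] [Fintype S₂] [Fintype S₃] [Fintype S₄]
    [DecidableEq S₁] [DecidableEq S₂] [DecidableEq S₃] [DecidableEq S₄]
    (p : Ω → ℝ) (hp : ∀ ω, 0 ≤ p ω) (hp1 : ∑ ω, p ω = 1)
    (X₁ : Ω → S₁) (X₂ : Ω → S₂) (X₃ : Ω → S₃) (X₄ : Ω → S₄) :
    2 * mutualInfo p X₃ X₄ ≤
      mutualInfo p X₁ X₂ + mutualInfo p X₁ (fun ω => (X₃ ω, X₄ ω)) +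
        3 * condMutualInfo p X₃ X₄ X₁ + condMutualInfo p X₃ X₄ X₂ :=
  stmt_17_general p hp X₁ X₂ X₃ X₄
end
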